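/- Let A be a ring and (U,V) a complete hereditary cotorsion pair in Mod-A. For an A-module M and integer n ≥ 0, the following are equivalent: (1) M has a resolution 0 → U_n → ... → U_0 → M → 0 with each U_i in U; (2) for every projective resolution P of M, the n-th cokernel (syzygy) Coker(P_{n+1} → P_n) is in U; (3) Ext_A^{n+1}(M,V) = 0 for every V in V. -/

import Mathlib

universe u

open CategoryTheory Limits

namespace OSG

variable (A : Type u) [Ring A]

/-- `Ext¹_A(M,N) = 0`: every short exact sequence `0 → N → E → M → 0` splits. -/
def Ext1Zero (M N : ModuleCat.{u} A) : Prop :=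
  ∀ (E : ModuleCat.{u} A) (i : N ⟶ E) (p : E ⟶ M),
    Function.Injective i → Function.Surjective p →
      LinearMap.range i.hom = LinearMap.ker p.hom → ∃ r : E ⟶ N, i ≫ r = 𝟙 N

/-- `Ext^{n+1}_A(M,N) = 0`, expressed by dimension shifting along projective resolutions. -/
def ExtZeroSucc (n : ℕ) (M N : ModuleCat.{u} A) : Prop :=
  ∀ P : ProjectiveResolution M, Ext1Zero A (cokernel (P.complex.d (n + 1) n)) N

def IsCotorsionPair (U V : Set (ModuleCat.{u} A)) : Prop :=
  U = {M | ∀ N ∈ V, Ext1Zero A M N} ∧ V = {N | ∀ M ∈ U, Ext1Zero A M N}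

/-- Every module has a special `U`-precover and a special `V`-preenvelope. -/
def IsCompletePair (U V : Set (ModuleCat.{u} A)) : Prop :=
  (∀ M : ModuleCat.{u} A, ∃ (K U₀ : ModuleCat.{u} A) (j : K ⟶ U₀) (p : U₀ ⟶ M),
      U₀ ∈ U ∧ K ∈ V ∧ Function.Injective j ∧ Function.Surjective p ∧
        LinearMap.range j.hom = LinearMap.ker p.hom) ∧
  (∀ M : ModuleCat.{u} A, ∃ (V₀ C : ModuleCat.{u} A) (ι : M ⟶ V₀) (q : V₀ ⟶ C),
      V₀ ∈ V ∧ C ∈ U ∧ Function.Injective ι ∧ Function.Surjective q ∧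
        LinearMap.range ι.hom = LinearMap.ker q.hom)

def IsHereditaryPair (U V : Set (ModuleCat.{u} A)) : Prop :=
  ∀ M ∈ U, ∀ N ∈ V, ∀ n : ℕ, ExtZeroSucc A n M N

def leftPerp (C : Set (ModuleCat.{u} A)) : Set (ModuleCat.{u} A) :=
  {M | ∀ N ∈ C, Ext1Zero A M N}

def rightPerp (C : Set (ModuleCat.{u} A)) : Set (ModuleCat.{u} A) :=
  {N | ∀ M ∈ C, Ext1Zero A M N}

def GeneratedBySet (V : Set (ModuleCat.{u} A)) : Prop :=
  ∃ S : Set (ModuleCat.{u} A), V = rightPerp A S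

/-- `M` has a resolution `0 → U_n → ⋯ → U_0 → M → 0` with all `U_i ∈ U`
(i.e. `U`-projective dimension at most `n`). -/
def ResLE (U : Set (ModuleCat.{u} A)) : ℕ → ModuleCat.{u} A → Prop
  | 0, M => M ∈ U
  | n + 1, M =>
    ResLE U n M ∨
      ∃ (K U₀ : ModuleCat.{u} A) (j : K ⟶ U₀) (p : U₀ ⟶ M),
        U₀ ∈ U ∧ Function.Injective j ∧ Function.Surjective p ∧
          LinearMap.range j.hom = LinearMap.ker p.hom ∧ ResLE U n K

/-- `M` has a coresolution `0 → M → V^0 → ⋯ → V^n → 0` with all `V^i ∈ V`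
(i.e. `V`-injective dimension at most `n`). -/
def CoresLE (V : Set (ModuleCat.{u} A)) : ℕ → ModuleCat.{u} A → Prop
  | 0, M => M ∈ V
  | n + 1, M =>
    CoresLE V n M ∨
      ∃ (V₀ C : ModuleCat.{u} A) (ι : M ⟶ V₀) (q : V₀ ⟶ C),
        V₀ ∈ V ∧ Function.Injective ι ∧ Function.Surjective q ∧
          LinearMap.range ι.hom = LinearMap.ker q.hom ∧ CoresLE V n C

/-- The `U`-projective dimension of `M`, as an extended natural number. -/
noncomputable def resDim (U : Set (ModuleCat.{u} A)) (M : ModuleCat.{u} A) : ℕ∞ :=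
  sInf {c : ℕ∞ | ∃ n : ℕ, c = n ∧ ResLE A U n M}

/-- The `V`-injective dimension of `M`, as an extended natural number. -/
noncomputable def coresDim (V : Set (ModuleCat.{u} A)) (M : ModuleCat.{u} A) : ℕ∞ :=
  sInf {c : ℕ∞ | ∃ n : ℕ, c = n ∧ CoresLE A V n M}

def prjClass : Set (ModuleCat.{u} A) := {M | Projective M}

def injClass : Set (ModuleCat.{u} A) := {M | Injective M}

section Complexes

/-- The complex `T` is acyclic (exact everywhere). -/
def Acyclic (T : ChainComplex (ModuleCat.{u} A) ℤ) : Prop := ∀ n : ℤ, T.ExactAt n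

/-- The complex `Hom_A(E, T)` is acyclic. -/
def HomIntoExact (E : ModuleCat.{u} A) (T : ChainComplex (ModuleCat.{u} A) ℤ) : Prop :=
  ∀ (n : ℤ) (f : E ⟶ T.X n), f ≫ T.d n (n - 1) = 0 →
    ∃ g : E ⟶ T.X (n + 1), g ≫ T.d (n + 1) n = f

/-- The complex `Hom_A(T, W)` is acyclic. -/
def HomFromExact (T : ChainComplex (ModuleCat.{u} A) ℤ) (W : ModuleCat.{u} A) : Prop :=
  ∀ (n : ℤ) (f : T.X n ⟶ W), T.d (n + 1) n ≫ f = 0 →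
    ∃ g : T.X (n - 1) ⟶ W, T.d n (n - 1) ≫ g = f

/-- `M` is a Gorenstein injective `A`-module. -/
def GorensteinInjective (M : ModuleCat.{u} A) : Prop :=
  ∃ T : ChainComplex (ModuleCat.{u} A) ℤ,
    (∀ n, Injective (T.X n)) ∧ Acyclic A T ∧
      (∀ E : ModuleCat.{u} A, Injective E → HomIntoExact A E T) ∧
      ∃ n : ℤ, Nonempty (M ≅ T.cycles n)

/-- `M` is a Gorenstein projective `A`-module. -/
def GorensteinProjective (M : ModuleCat.{u} A) : Prop :=
  ∃ T : ChainComplex (ModuleCat.{u} A) ℤ,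
    (∀ n, Projective (T.X n)) ∧ Acyclic A T ∧
      (∀ Q : ModuleCat.{u} A, Projective Q → HomFromExact A T Q) ∧
      ∃ n : ℤ, Nonempty (M ≅ T.cycles n)

end Complexes
section Tensor

/-- The balancing relations inside `N ⊗_ℤ M` for a right module `N` and a left module `M`. -/
def balRel (N : ModuleCat.{u} Aᵐᵒᵖ) (M : ModuleCat.{u} A) :
    Submodule ℤ (TensorProduct ℤ N M) :=
  Submodule.span ℤ
    {x | ∃ (n : N) (a : A) (m : M),
      x = (MulOpposite.op a • n) ⊗ₜ[ℤ] m - n ⊗ₜ[ℤ] (a • m)}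

/-- The tensor product `N ⊗_A M` of a right `A`-module and a left `A`-module. -/
def balTensor (N : ModuleCat.{u} Aᵐᵒᵖ) (M : ModuleCat.{u} A) : Type u :=
  TensorProduct ℤ N M ⧸ balRel A N M

noncomputable instance (N : ModuleCat.{u} Aᵐᵒᵖ) (M : ModuleCat.{u} A) :
    AddCommGroup (balTensor A N M) :=
  inferInstanceAs (AddCommGroup (TensorProduct ℤ N M ⧸ balRel A N M))

noncomputable instance (N : ModuleCat.{u} Aᵐᵒᵖ) (M : ModuleCat.{u} A) :
    Module ℤ (balTensor A N M) :=
  inferInstanceAs (Module ℤ (TensorProduct ℤ N M ⧸ balRel A N M))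

/-- The map `N ⊗_A M → N ⊗_A M'` induced by `f : M → M'`. -/
noncomputable def balMap (N : ModuleCat.{u} Aᵐᵒᵖ) {M M' : ModuleCat.{u} A} (f : M ⟶ M') :
    balTensor A N M →ₗ[ℤ] balTensor A N M' :=
  Submodule.mapQ (balRel A N M) (balRel A N M')
    (LinearMap.lTensor (R := ℤ) N f.hom.toAddMonoidHom.toIntLinearMap)
    (by
      unfold balRel
      rw [Submodule.span_le]
      rintro x ⟨n, a, m, rfl⟩
      have h : f.hom.toAddMonoidHom.toIntLinearMap (a • m) = a • f.hom.toAddMonoidHom.toIntLinearMap m :=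
        f.hom.map_smul a m
      have key : (LinearMap.lTensor (R := ℤ) N f.hom.toAddMonoidHom.toIntLinearMap)
          ((MulOpposite.op a • n) ⊗ₜ[ℤ] m - n ⊗ₜ[ℤ] (a • m)) ∈ Submodule.span ℤ
            {x : TensorProduct ℤ N M' | ∃ (n : N) (a : A) (m : M'),
              x = (MulOpposite.op a • n) ⊗ₜ[ℤ] m - n ⊗ₜ[ℤ] (a • m)} := by
        rw [map_sub, LinearMap.lTensor_tmul, LinearMap.lTensor_tmul, h]
        exact Submodule.subset_span ⟨n, a, f.hom.toAddMonoidHom.toIntLinearMap m, rfl⟩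
      exact key)

/-- The map `N ⊗_A M → N' ⊗_A M` induced by `g : N → N'`. -/
noncomputable def balMapR {N N' : ModuleCat.{u} Aᵐᵒᵖ} (g : N ⟶ N') (M : ModuleCat.{u} A) :
    balTensor A N M →ₗ[ℤ] balTensor A N' M :=
  Submodule.mapQ (balRel A N M) (balRel A N' M)
    (LinearMap.rTensor (R := ℤ) M g.hom.toAddMonoidHom.toIntLinearMap)
    (by
      unfold balRel
      rw [Submodule.span_le]
      rintro x ⟨n, a, m, rfl⟩
      have h : g.hom.toAddMonoidHom.toIntLinearMap (MulOpposite.op a • n) =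
          MulOpposite.op a • g.hom.toAddMonoidHom.toIntLinearMap n :=
        g.hom.map_smul (MulOpposite.op a) n
      have key : (LinearMap.rTensor (R := ℤ) M g.hom.toAddMonoidHom.toIntLinearMap)
          ((MulOpposite.op a • n) ⊗ₜ[ℤ] m - n ⊗ₜ[ℤ] (a • m)) ∈ Submodule.span ℤ
            {x : TensorProduct ℤ N' M | ∃ (n : N') (a : A) (m : M),
              x = (MulOpposite.op a • n) ⊗ₜ[ℤ] m - n ⊗ₜ[ℤ] (a • m)} := by
        rw [map_sub, LinearMap.rTensor_tmul, LinearMap.rTensor_tmul, h]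
        exact Submodule.subset_span ⟨g.hom.toAddMonoidHom.toIntLinearMap n, a, m, rfl⟩
      exact key)

/-- A left `A`-module `M` is flat if `− ⊗_A M` preserves injections of right `A`-modules. -/
def FlatM (M : ModuleCat.{u} A) : Prop :=
  ∀ (N N' : ModuleCat.{u} Aᵐᵒᵖ) (g : N ⟶ N'), Function.Injective g →
    Function.Injective (balMapR A g M)

def flatClass : Set (ModuleCat.{u} A) := {M | FlatM A M}

/-- `M` is cotorsion if `Ext¹_A(F,M) = 0` for every flat module `F`. -/
def cotClass : Set (ModuleCat.{u} A) := {M | ∀ F ∈ flatClass A, Ext1Zero A F M}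

end Tensor
section Rest

variable (A : Type u) [Ring A]

/-- Exactness of `N ⊗_A T` at spot `n`. -/
def TensorExactAt (N : ModuleCat.{u} Aᵐᵒᵖ) (T : ChainComplex (ModuleCat.{u} A) ℤ)
    (n : ℤ) : Prop :=
  LinearMap.range (balMap A N (T.d (n + 1) n)) = LinearMap.ker (balMap A N (T.d n (n - 1)))

/-- `M` is a Gorenstein flat `A`-module. -/
def GorensteinFlat (M : ModuleCat.{u} A) : Prop :=
  ∃ T : ChainComplex (ModuleCat.{u} A) ℤ,
    (∀ n, T.X n ∈ flatClass A) ∧ Acyclic A T ∧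
      (∀ N : ModuleCat.{u} Aᵐᵒᵖ, Injective N → ∀ n : ℤ, TensorExactAt A N T n) ∧
      ∃ n : ℤ, Nonempty (M ≅ T.cycles n)

def gprjClass : Set (ModuleCat.{u} A) := {M | GorensteinProjective A M}
def ginjClass : Set (ModuleCat.{u} A) := {M | GorensteinInjective A M}
def gflatClass : Set (ModuleCat.{u} A) := {M | GorensteinFlat A M}

/-- projective dimension -/
noncomputable def pdim (M : ModuleCat.{u} A) : ℕ∞ := resDim A (prjClass A) M
/-- injective dimension -/
noncomputable def idim (M : ModuleCat.{u} A) : ℕ∞ := coresDim A (injClass A) M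
/-- flat dimension -/
noncomputable def fdim (M : ModuleCat.{u} A) : ℕ∞ := resDim A (flatClass A) M
/-- Gorenstein projective dimension -/
noncomputable def gpdim (M : ModuleCat.{u} A) : ℕ∞ := resDim A (gprjClass A) M
/-- Gorenstein injective dimension -/
noncomputable def gidim (M : ModuleCat.{u} A) : ℕ∞ := coresDim A (ginjClass A) M
/-- Gorenstein flat dimension -/
noncomputable def gfdim (M : ModuleCat.{u} A) : ℕ∞ := resDim A (gflatClass A) M

noncomputable def spli : ℕ∞ := ⨆ (I : ModuleCat.{u} A) (_ : Injective I), pdim A I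
noncomputable def silp : ℕ∞ := ⨆ (P : ModuleCat.{u} A) (_ : Projective P), idim A P
noncomputable def sfli : ℕ∞ := ⨆ (I : ModuleCat.{u} A) (_ : Injective I), fdim A I
noncomputable def splf : ℕ∞ := ⨆ (F : ModuleCat.{u} A) (_ : F ∈ flatClass A), pdim A F

noncomputable def FPD : ℕ∞ := ⨆ (M : ModuleCat.{u} A) (_ : pdim A M ≠ ⊤), pdim A M
noncomputable def FID : ℕ∞ := ⨆ (M : ModuleCat.{u} A) (_ : idim A M ≠ ⊤), idim A M
noncomputable def FFD : ℕ∞ := ⨆ (M : ModuleCat.{u} A) (_ : fdim A M ≠ ⊤), fdim A M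

/-- Gorenstein global dimension. -/
noncomputable def Ggldim : ℕ∞ := ⨆ (M : ModuleCat.{u} A), gpdim A M
/-- Gorenstein weak global dimension. -/
noncomputable def Gwgldim : ℕ∞ := ⨆ (M : ModuleCat.{u} A), gfdim A M

/-- sup of `U`-projective dimensions of injective modules. -/
noncomputable def relspli (U : Set (ModuleCat.{u} A)) : ℕ∞ :=
  ⨆ (I : ModuleCat.{u} A) (_ : Injective I), resDim A U I
/-- sup of `V`-injective dimensions of projective modules. -/
noncomputable def relsilp (V : Set (ModuleCat.{u} A)) : ℕ∞ :=
  ⨆ (P : ModuleCat.{u} A) (_ : Projective P), coresDim A V P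
/-- finitistic `U`-projective dimension. -/
noncomputable def relFPD (U : Set (ModuleCat.{u} A)) : ℕ∞ :=
  ⨆ (M : ModuleCat.{u} A) (_ : resDim A U M ≠ ⊤), resDim A U M
/-- finitistic `V`-injective dimension. -/
noncomputable def relFID (V : Set (ModuleCat.{u} A)) : ℕ∞ :=
  ⨆ (M : ModuleCat.{u} A) (_ : coresDim A V M ≠ ⊤), coresDim A V M

/-- Every acyclic complex of injectives has cycles in `V`. -/
def WeaklyRightPeriodic (V : Set (ModuleCat.{u} A)) : Prop :=
  ∀ T : ChainComplex (ModuleCat.{u} A) ℤ,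
    (∀ n, Injective (T.X n)) → Acyclic A T → ∀ n : ℤ, T.cycles n ∈ V

/-- Every acyclic complex of projectives has cycles in `U`. -/
def WeaklyLeftPeriodic (U : Set (ModuleCat.{u} A)) : Prop :=
  ∀ T : ChainComplex (ModuleCat.{u} A) ℤ,
    (∀ n, Projective (T.X n)) → Acyclic A T → ∀ n : ℤ, T.cycles n ∈ U

/-- A right `U`-totally acyclic complex witnesses a right `U`-Gorenstein module. -/
def RightGorenstein (U V : Set (ModuleCat.{u} A)) : Set (ModuleCat.{u} A) :=
  {M | ∃ T : ChainComplex (ModuleCat.{u} A) ℤ,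
    (∀ n, T.X n ∈ U) ∧ Acyclic A T ∧ (∀ n : ℤ, T.cycles n ∈ V) ∧
      (∀ W ∈ U ∩ V, HomFromExact A T W) ∧ Nonempty (M ≅ cokernel (T.d 1 0))}

/-- acyclic with all cycles in `V`. -/
def VAcyclicCx (V : Set (ModuleCat.{u} A)) (W : ChainComplex (ModuleCat.{u} A) ℤ) : Prop :=
  Acyclic A W ∧ ∀ n : ℤ, W.cycles n ∈ V

/-- acyclic with all cycles in `U`. -/
def UAcyclicCx (U : Set (ModuleCat.{u} A)) (W : ChainComplex (ModuleCat.{u} A) ℤ) : Prop :=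
  Acyclic A W ∧ ∀ n : ℤ, W.cycles n ∈ U

/-- A complex of modules in `U` is semi-`U` if every chain map to a `V`-acyclic
complex is null-homotopic (equivalently, `Hom(X,W)` is acyclic for `V`-acyclic `W`). -/
def SemiU (U V : Set (ModuleCat.{u} A)) (X : ChainComplex (ModuleCat.{u} A) ℤ) : Prop :=
  (∀ n, X.X n ∈ U) ∧
    ∀ W : ChainComplex (ModuleCat.{u} A) ℤ, VAcyclicCx A V W →
      ∀ f : X ⟶ W, Nonempty (Homotopy f 0)

/-- A complex of modules in `V` is semi-`V` if every chain map from a `U`-acyclic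
complex to it is null-homotopic. -/
def SemiV (U V : Set (ModuleCat.{u} A)) (Y : ChainComplex (ModuleCat.{u} A) ℤ) : Prop :=
  (∀ n, Y.X n ∈ V) ∧
    ∀ T : ChainComplex (ModuleCat.{u} A) ℤ, UAcyclicCx A U T →
      ∀ f : T ⟶ Y, Nonempty (Homotopy f 0)

/-- `W` is isomorphic to the module `M` in the derived category. -/
def IsReplacementOf (W : ChainComplex (ModuleCat.{u} A) ℤ) (M : ModuleCat.{u} A) : Prop :=
  (∀ n : ℤ, n ≠ 0 → W.ExactAt n) ∧ Nonempty (W.homology 0 ≅ M)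

/-- `RGor_U`-projective dimension of `M` is at most `n`: some semi-`U`-`V` replacement `W`
of `M` has `Coker(W_{n+1} → W_n)` right `U`-Gorenstein. -/
def RGorpdLE (U V : Set (ModuleCat.{u} A)) (n : ℕ) (M : ModuleCat.{u} A) : Prop :=
  ∃ W : ChainComplex (ModuleCat.{u} A) ℤ,
    SemiU A U V W ∧ SemiV A U V W ∧ IsReplacementOf A W M ∧
      cokernel (W.d ((n : ℤ) + 1) (n : ℤ)) ∈ RightGorenstein A U V

/-- The `RGor_U`-projective dimension. -/
noncomputable def rgorDim (U V : Set (ModuleCat.{u} A)) (M : ModuleCat.{u} A) : ℕ∞ :=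
  sInf {c : ℕ∞ | ∃ n : ℕ, c = n ∧ RGorpdLE A U V n M}

/-- The `RGor_U` relative Gorenstein global dimension. -/
noncomputable def rgorGldim (U V : Set (ModuleCat.{u} A)) : ℕ∞ :=
  ⨆ (M : ModuleCat.{u} A), rgorDim A U V M

/-- The Gorenstein flat-cotorsion dimension. -/
noncomputable def gfcDim (M : ModuleCat.{u} A) : ℕ∞ :=
  rgorDim A (flatClass A) (cotClass A) M

/-- The Gorenstein flat-cotorsion global dimension. -/
noncomputable def Gfcgldim : ℕ∞ := rgorGldim A (flatClass A) (cotClass A)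

/-- `A` is right weak coherent: products of flat left `A`-modules have finite
flat dimension. -/
def RightWeakCoherent : Prop :=
  ∀ (ι : Type u) (F : ι → ModuleCat.{u} A), (∀ i, F i ∈ flatClass A) →
    fdim A (ModuleCat.of A ((i : ι) → F i)) ≠ ⊤

/-- `A` is left `ℵ₀`-noetherian: every left ideal is countably generated. -/
def Aleph0Noetherian : Prop :=
  ∀ I : Ideal A, ∃ s : Set A, s.Countable ∧ Ideal.span s = I

end Rest


end OSG

/-!
`Ext1Zero` is the vanishing of Yoneda `Ext¹`; via pushouts it agrees with the vanishing of the
derived-category `Ext¹`, and `ExtZeroSucc n` then agrees with the vanishing of `Extⁿ⁺¹` by dimension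
shifting along a projective resolution. Given a resolution `0 → K → U₀ → M → 0` with `K` of
`U`-resolution length `n`, the long exact `Ext(-, V)` sequence and `Ext^{≥1}(U₀, V) = 0` give
`Ext^{≥n+2}(M, V) = 0`. Conversely, if `Extⁿ⁺²(M, V) = 0` and `0 → K → P → M → 0` with `P`
projective, then `Extⁿ⁺¹(K, V) ≅ Extⁿ⁺²(M, V) = 0`, so `K` has a `U`-resolution of length `n` by
induction; the base case `n = 0` is the definition of `U` as the left orthogonal of `V`.
-/

universe w

namespace CategoryTheory

open Abelian

variable {C : Type*} [Category C] [Abelian C]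

lemma forall_exists_image_ι_comp_eq_iff {X₂ X₁ X₀ N : C} {e : X₂ ⟶ X₁} {d : X₁ ⟶ X₀}
    {hed : e ≫ d = 0} (hS : (ShortComplex.mk e d hed).Exact) :
    (∀ f : Abelian.image d ⟶ N, ∃ g : X₀ ⟶ N, Abelian.image.ι d ≫ g = f) ↔
      ∀ f : X₁ ⟶ N, e ≫ f = 0 → ∃ g : X₀ ⟶ N, d ≫ g = f := by
  have he : e ≫ Abelian.factorThruImage d = 0 := by
    rw [← cancel_mono (Abelian.image.ι d), Category.assoc, Abelian.image.fac, hed, zero_comp]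
  have hS' : (ShortComplex.mk e _ he).Exact :=
    (ShortComplex.exact_iff_of_epi_of_isIso_of_mono
      (S₁ := ShortComplex.mk e _ he) (S₂ := ShortComplex.mk e d hed)
      ⟨𝟙 _, 𝟙 _, Abelian.image.ι d, by simp, by simp⟩).2 hS
  constructor
  · intro h f hf
    obtain ⟨f', hf'⟩ := CokernelCofork.IsColimit.desc' hS'.gIsCokernel f hf
    obtain ⟨g, rfl⟩ := h f'
    exact ⟨g, by rw [← Abelian.image.fac d, Category.assoc, ← hf']; rfl⟩
  · intro h f
    obtain ⟨g, hg⟩ := h (Abelian.factorThruImage d ≫ f) (by rw [reassoc_of% he, zero_comp])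
    refine ⟨g, (cancel_epi (Abelian.factorThruImage d)).1 ?_⟩
    rw [← hg, ← Category.assoc, Abelian.image.fac]

variable [HasExt.{w} C]

namespace ShortComplex.ShortExact

variable {S : ShortComplex C} (hS : S.ShortExact)
include hS

lemma ext_one_eq_zero_iff_forall_exists_comp_eq [Projective S.X₂] (N : C) :
    (∀ α : Ext S.X₃ N 1, α = 0) ↔ ∀ f : S.X₁ ⟶ N, ∃ g : S.X₂ ⟶ N, S.f ≫ g = f := by
  constructor
  · intro h f
    obtain ⟨x, hx⟩ := Ext.contravariant_sequence_exact₁ hS N (Ext.mk₀ f) (add_zero 1) (h _)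
    obtain ⟨g, rfl⟩ := (Ext.mk₀_bijective _ _).2 x
    exact ⟨g, (Ext.mk₀_bijective _ _).1 (by simpa using hx)⟩
  · intro h α
    obtain ⟨x, rfl⟩ := Ext.contravariant_sequence_exact₃ hS N α (Ext.eq_zero_of_projective _)
      (add_zero 1)
    obtain ⟨f, rfl⟩ := (Ext.mk₀_bijective _ _).2 x
    obtain ⟨g, rfl⟩ := h f
    rw [← Ext.mk₀_comp_mk₀, hS.extClass_comp_assoc]

lemma exists_retraction_of_ext_one_eq_zero (h : ∀ α : Ext S.X₃ S.X₁ 1, α = 0) :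
    ∃ r : S.X₂ ⟶ S.X₁, S.f ≫ r = 𝟙 S.X₁ := by
  obtain ⟨x, hx⟩ :=
    Ext.contravariant_sequence_exact₁ hS S.X₁ (Ext.mk₀ (𝟙 S.X₁)) (add_zero 1) (h _)
  obtain ⟨r, rfl⟩ := (Ext.mk₀_bijective _ _).2 x
  exact ⟨r, (Ext.mk₀_bijective _ _).1 (by simpa using hx)⟩

end ShortComplex.ShortExact

namespace ProjectiveResolution

variable {M : C} (P : ProjectiveResolution M) (N : C)

lemma ext_eq_zero_iff (n : ℕ) :
    (∀ α : Ext M N (n + 1), α = 0) ↔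
      ∀ f : P.complex.X (n + 1) ⟶ N, P.complex.d (n + 2) (n + 1) ≫ f = 0 →
        ∃ g : P.complex.X n ⟶ N, P.complex.d (n + 1) n ≫ g = f := by
  constructor
  · intro h f hf
    exact (P.extMk_eq_zero_iff f (n + 2) rfl hf n rfl).1 (h _)
  · intro h α
    obtain ⟨f, hf, rfl⟩ := P.extMk_surjective α (n + 2) rfl
    exact (P.extMk_eq_zero_iff f (n + 2) rfl hf n rfl).2 (h f hf)

lemma ext_one_cokernel_eq_zero_iff (n : ℕ) :
    (∀ α : Ext (cokernel (P.complex.d (n + 1) n)) N 1, α = 0) ↔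
      ∀ α : Ext M N (n + 1), α = 0 := by
  have hS : (ShortComplex.mk (Abelian.image.ι (P.complex.d (n + 1) n))
      (cokernel.π (P.complex.d (n + 1) n)) (kernel.condition _)).ShortExact :=
    ShortComplex.ShortExact.mk' (ShortComplex.exact_of_f_is_kernel _ (kernelIsKernel _))
      inferInstance inferInstance
  rw [hS.ext_one_eq_zero_iff_forall_exists_comp_eq,
    forall_exists_image_ι_comp_eq_iff (P.exact_succ n), P.ext_eq_zero_iff]

end ProjectiveResolution

end CategoryTheory

namespace OSG

open Abelian

variable {A : Type u} [Ring A]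

lemma shortExact_of_range_eq_ker {X Y Z : ModuleCat.{u} A} {i : X ⟶ Y} {p : Y ⟶ Z}
    (hi : Function.Injective i) (hp : Function.Surjective p)
    (h : LinearMap.range i.hom = LinearMap.ker p.hom) :
    (ShortComplex.mk i p (ModuleCat.hom_ext (LinearMap.range_le_ker_iff.1 h.le))).ShortExact :=
  ShortComplex.ShortExact.mk' ((ShortComplex.moduleCat_exact_iff_range_eq_ker _).2 h)
    ((ModuleCat.mono_iff_injective _).2 hi) ((ModuleCat.epi_iff_surjective _).2 hp)

lemma Ext1Zero.exists_comp_eq {S : ShortComplex (ModuleCat.{u} A)} (hS : S.ShortExact)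
    {N : ModuleCat.{u} A} (h : Ext1Zero A S.X₃ N) (f : S.X₁ ⟶ N) :
    ∃ g : S.X₂ ⟶ N, S.f ≫ g = f := by
  -- `E` is the pushout of `S` along `f`; a retraction of `i` restricted to `S.X₂` extends `f`.
  let R := LinearMap.range (S.f.hom.prod (-f.hom))
  let E := ModuleCat.of A ((S.X₂ × N) ⧸ R)
  let i : N ⟶ E := ModuleCat.ofHom (R.mkQ ∘ₗ LinearMap.inr A S.X₂ N)
  have hR : R ≤ LinearMap.ker (S.g.hom ∘ₗ LinearMap.fst A S.X₂ N) := by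
    rintro _ ⟨x, rfl⟩
    simp
  let p : E ⟶ S.X₃ := ModuleCat.ofHom (R.liftQ _ hR)
  have hi : Function.Injective i := by
    refine (injective_iff_map_eq_zero _).2 fun n hn => ?_
    obtain ⟨x, hx⟩ := (Submodule.Quotient.mk_eq_zero R).1 hn
    obtain ⟨hx₁, hx₂⟩ := Prod.ext_iff.1 hx
    have hx0 : x = 0 := hS.injective_f (hx₁.trans (map_zero _).symm)
    simpa [hx0] using hx₂.symm
  have hp : Function.Surjective p := by
    intro z
    obtain ⟨y, rfl⟩ := hS.surjective_g z
    exact ⟨R.mkQ (y, 0), rfl⟩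
  have hip : LinearMap.range i.hom = LinearMap.ker p.hom := by
    apply le_antisymm
    · rintro _ ⟨n, rfl⟩
      exact S.g.hom.map_zero
    · intro z hz
      obtain ⟨⟨y, n⟩, rfl⟩ := R.mkQ_surjective z
      obtain ⟨x, rfl⟩ := hS.exact.moduleCat_range_eq_ker.ge hz
      exact ⟨n + f x, (Submodule.Quotient.eq R).2 ⟨-x, by simp⟩⟩
  obtain ⟨r, hr⟩ := h E i p hi hp hip
  refine ⟨ModuleCat.ofHom (R.mkQ ∘ₗ LinearMap.inl A S.X₂ N) ≫ r, ?_⟩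
  ext x
  have hx : R.mkQ (S.f x, 0) = i (f x) := (Submodule.Quotient.eq R).2 ⟨x, by simp⟩
  change r (R.mkQ (S.f x, 0)) = f x
  rw [hx]
  exact congrArg (fun φ => φ (f x)) hr

lemma ext1Zero_iff_ext_one_eq_zero {M N : ModuleCat.{u} A} :
    Ext1Zero A M N ↔ ∀ α : Ext M N 1, α = 0 := by
  constructor
  · intro h
    let S := ShortComplex.mk _ _ (kernel.condition (Projective.π M))
    have hS : S.ShortExact := { exact := ShortComplex.exact_kernel _ }
    exact (hS.ext_one_eq_zero_iff_forall_exists_comp_eq N).2 (h.exists_comp_eq hS)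
  · intro h E i p hi hp hip
    exact (shortExact_of_range_eq_ker hi hp hip).exists_retraction_of_ext_one_eq_zero h

lemma extZeroSucc_iff_ext_eq_zero {n : ℕ} {M N : ModuleCat.{u} A} :
    ExtZeroSucc A n M N ↔ ∀ α : Ext M N (n + 1), α = 0 := by
  constructor
  · intro h
    exact ((projectiveResolution M).ext_one_cokernel_eq_zero_iff N n).1
      (ext1Zero_iff_ext_one_eq_zero.1 (h _))
  · intro h P
    exact ext1Zero_iff_ext_one_eq_zero.2 ((P.ext_one_cokernel_eq_zero_iff N n).2 h)

section CotorsionPair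

variable {U V : Set (ModuleCat.{u} A)}

lemma mem_iff_ext_one_eq_zero (hU : U = leftPerp A V) {M : ModuleCat.{u} A} :
    M ∈ U ↔ ∀ N ∈ V, ∀ α : Ext M N 1, α = 0 := by
  simp only [hU, leftPerp, Set.mem_ofPred_eq, ext1Zero_iff_ext_one_eq_zero]

lemma mem_of_projective (hU : U = leftPerp A V) {P : ModuleCat.{u} A} [Projective P] : P ∈ U :=
  (mem_iff_ext_one_eq_zero hU).2 fun _ _ => Ext.eq_zero_of_projective

lemma IsHereditaryPair.ext_eq_zero (h : IsHereditaryPair A U V) {M N : ModuleCat.{u} A}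
    (hM : M ∈ U) (hN : N ∈ V) (n : ℕ) (α : Ext M N (n + 1)) : α = 0 :=
  extZeroSucc_iff_ext_eq_zero.1 (h M hM N hN n) α

lemma ext_eq_zero_of_resLE (hhered : IsHereditaryPair A U V) {n : ℕ} {M : ModuleCat.{u} A}
    (hM : ResLE A U n M) {N : ModuleCat.{u} A} (hN : N ∈ V) {k : ℕ} (hk : n ≤ k)
    (α : Ext M N (k + 1)) : α = 0 := by
  induction n generalizing M k with
  | zero => exact hhered.ext_eq_zero hM hN k α
  | succ n ih =>
    obtain hM | ⟨K, U₀, j, p, hU₀, hj, hp, hjp, hK⟩ := hM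
    · exact ih hM (by omega) α
    obtain ⟨k, rfl⟩ : ∃ k', k = k' + 1 := ⟨k - 1, by omega⟩
    obtain ⟨x, rfl⟩ := Ext.contravariant_sequence_exact₃ (shortExact_of_range_eq_ker hj hp hjp)
      N α (hhered.ext_eq_zero hU₀ hN _ _) (add_comm 1 (k + 1))
    rw [ih hK (by omega) x, Ext.comp_zero]

lemma resLE_of_ext_eq_zero (hU : U = leftPerp A V) {n : ℕ} {M : ModuleCat.{u} A}
    (h : ∀ N ∈ V, ∀ α : Ext M N (n + 1), α = 0) : ResLE A U n M := by
  induction n generalizing M with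
  | zero => exact (mem_iff_ext_one_eq_zero hU).2 h
  | succ n ih =>
    let S := ShortComplex.mk _ _ (kernel.condition (Projective.π M))
    have hS : S.ShortExact := { exact := ShortComplex.exact_kernel _ }
    refine Or.inr ⟨S.X₁, S.X₂, S.f, S.g, mem_of_projective hU, hS.injective_f, hS.surjective_g,
      hS.exact.moduleCat_range_eq_ker, ih fun N hN α => ?_⟩
    obtain ⟨x, rfl⟩ := Ext.contravariant_sequence_exact₁ hS N α (add_comm 1 (n + 1)) (h N hN _)
    rw [Ext.eq_zero_of_projective x, Ext.comp_zero]

end CotorsionPair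

theorem stmt_0_general (A : Type u) [Ring A] (U V : Set (ModuleCat.{u} A))
    (hpair : IsCotorsionPair A U V)
    (hhered : IsHereditaryPair A U V) (M : ModuleCat.{u} A) (n : ℕ) :
    (ResLE A U n M ↔ ∀ N ∈ V, ExtZeroSucc A n M N) ∧
    ((∀ P : ProjectiveResolution M, cokernel (P.complex.d (n + 1) n) ∈ U) ↔
      ∀ N ∈ V, ExtZeroSucc A n M N) := by
  have hU : U = leftPerp A V := hpair.1
  refine ⟨?_, ?_⟩
  · simp only [extZeroSucc_iff_ext_eq_zero]
    exact ⟨fun h N hN => ext_eq_zero_of_resLE hhered h hN le_rfl, resLE_of_ext_eq_zero hU⟩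
  · rw [hU]
    exact ⟨fun h N hN P => h P N hN, fun h P N hN => h N hN P⟩

/-- Prp 1.? : characterizations of `U`-projective dimension at most `n`. -/
theorem stmt_0 (A : Type u) [Ring A] (U V : Set (ModuleCat.{u} A))
    (hpair : IsCotorsionPair A U V) (hcomplete : IsCompletePair A U V)
    (hhered : IsHereditaryPair A U V) (M : ModuleCat.{u} A) (n : ℕ) :
    (ResLE A U n M ↔ ∀ N ∈ V, ExtZeroSucc A n M N) ∧
    ((∀ P : ProjectiveResolution M, cokernel (P.complex.d (n + 1) n) ∈ U) ↔
      ∀ N ∈ V, ExtZeroSucc A n M N) :=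
  stmt_0_general A U V hpair hhered M n

end OSG
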